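/- Define ℓ⁰(x) := (1/(2π)) ∫_0^{2π} √(1 + sin²(x)/(1 − cos(u)cos(x))²) du for x ∈ (0,π). Then ℓ⁰ is continuous on (0,π) and its range contains the interval [√2, 2). -/

import Mathlib

/-!
On `(0, π)` the denominator `1 - cos u cos x` stays positive, so the integrand is jointly
continuous in `(x, u)` and `ℓ⁰` is continuous as a parametric integral. At `x = π / 2` the
integrand is constantly `√2`. As `x → 0⁺` the integrand is at least `1` everywhere, and near
`u = 0` it is at least `sin x / (1 - cos u cos x)`, which dominates a Cauchy profile of width
`2 sin (x / 2)` whose mass tends to `2π`; hence `ℓ⁰` exceeds any `y < 2` close to `0`, and the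
intermediate value theorem on `[x, π / 2]` covers `[√2, 2)`.
-/

open Real

noncomputable def ellZero (x : ℝ) : ℝ :=
  (1 / (2 * π)) * ∫ u in (0 : ℝ)..(2 * π),
    Real.sqrt (1 + Real.sin x ^ 2 / (1 - Real.cos u * Real.cos x) ^ 2)

open Set Filter Topology intervalIntegral

noncomputable def ellZeroIntegrand (x u : ℝ) : ℝ :=
  √(1 + sin x ^ 2 / (1 - cos u * cos x) ^ 2)

lemma ellZeroIntegrand_periodic (x : ℝ) : Function.Periodic (ellZeroIntegrand x) (2 * π) := by
  intro u
  simp only [ellZeroIntegrand, cos_add_two_pi]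

lemma ellZero_eq_integral_neg_pi_pi (x : ℝ) :
    ellZero x = (1 / (2 * π)) * ∫ u in -π..π, ellZeroIntegrand x u := by
  have := (ellZeroIntegrand_periodic x).intervalIntegral_add_eq (-π) 0
  rw [zero_add, show -π + 2 * π = π by ring] at this
  rw [ellZero, this]
  rfl

lemma abs_cos_lt_one_of_mem_Ioo {x : ℝ} (hx : x ∈ Ioo 0 π) : |cos x| < 1 := by
  have hs : 0 < sin x := sin_pos_of_pos_of_lt_pi hx.1 hx.2
  rw [← sq_lt_one_iff_abs_lt_one, cos_sq']
  linarith [pow_pos hs 2]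

lemma one_sub_cos_mul_cos_pos {x : ℝ} (hx : |cos x| < 1) (u : ℝ) : 0 < 1 - cos u * cos x := by
  have : cos u * cos x ≤ |cos x| := by
    calc cos u * cos x ≤ |cos u * cos x| := le_abs_self _
      _ = |cos u| * |cos x| := abs_mul _ _
      _ ≤ 1 * |cos x| := by gcongr; exact abs_cos_le_one u
      _ = |cos x| := one_mul _
  linarith

lemma Continuous.ellZeroIntegrand {X : Type*} [TopologicalSpace X] {f g : X → ℝ}
    (hf : Continuous f) (hg : Continuous g) (h : ∀ p, |cos (f p)| < 1) :
    Continuous fun p => ellZeroIntegrand (f p) (g p) :=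
  (continuous_const.add ((by fun_prop : Continuous fun p => sin (f p) ^ 2).div (by fun_prop)
    fun p => (pow_pos (one_sub_cos_mul_cos_pos (h p) (g p)) 2).ne')).sqrt

lemma continuousOn_ellZero : ContinuousOn ellZero (Ioo 0 π) := by
  rw [continuousOn_iff_continuous_domRestrict]
  have hF : Continuous fun p : Ioo 0 π × ℝ => ellZeroIntegrand p.1 p.2 :=
    (continuous_subtype_val.comp continuous_fst).ellZeroIntegrand continuous_snd
      fun p => abs_cos_lt_one_of_mem_Ioo p.1.2
  exact continuous_const.mul (continuous_parametric_intervalIntegral_of_continuous' hF _ _)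

lemma ellZero_pi_div_two : ellZero (π / 2) = √2 := by
  have hπ : π ≠ 0 := pi_ne_zero
  simp only [ellZero, sin_pi_div_two, cos_pi_div_two, mul_zero, sub_zero]
  norm_num [integral_const]
  field_simp

lemma one_le_ellZeroIntegrand (x u : ℝ) : 1 ≤ ellZeroIntegrand x u :=
  one_le_sqrt.mpr (le_add_of_nonneg_right (by positivity))

lemma div_le_ellZeroIntegrand (x u : ℝ) : sin x / (1 - cos u * cos x) ≤ ellZeroIntegrand x u :=
  le_sqrt_of_sq_le (by rw [div_pow]; linarith)

lemma cos_half_mul_div_le_ellZeroIntegrand {x : ℝ} (hx₀ : 0 < x) (hx : x ≤ π / 2) (u : ℝ) :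
    2 * cos (x / 2) * (2 * sin (x / 2) / ((2 * sin (x / 2)) ^ 2 + u ^ 2))
      ≤ ellZeroIntegrand x u := by
  have hsin : sin x = 2 * sin (x / 2) * cos (x / 2) := by
    rw [← sin_two_mul, mul_div_cancel₀ x two_ne_zero]
  have hcos : cos x = 1 - 2 * sin (x / 2) ^ 2 := by
    conv_lhs => rw [← mul_div_cancel₀ x two_ne_zero]
    rw [cos_two_mul, cos_sq']
    ring
  have hsx : 0 ≤ sin x := sin_nonneg_of_nonneg_of_le_pi hx₀.le (by linarith [pi_pos])
  have hcx : 0 ≤ cos x := cos_nonneg_of_mem_Icc ⟨by linarith [pi_pos], hx⟩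
  have hd := one_sub_cos_mul_cos_pos (abs_cos_lt_one_of_mem_Ioo ⟨hx₀, by linarith [pi_pos]⟩) u
  -- `cos u ≥ 1 - u²/2` puts the denominator below that of the Cauchy profile
  have hle : 1 - cos u * cos x ≤ ((2 * sin (x / 2)) ^ 2 + u ^ 2) / 2 := by
    have := one_sub_sq_div_two_le_cos (x := u)
    nlinarith [cos_le_one x]
  calc 2 * cos (x / 2) * (2 * sin (x / 2) / ((2 * sin (x / 2)) ^ 2 + u ^ 2))
      = sin x / (((2 * sin (x / 2)) ^ 2 + u ^ 2) / 2) := by rw [hsin, div_div_eq_mul_div]; ring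
    _ ≤ sin x / (1 - cos u * cos x) := div_le_div_of_nonneg_left hsx hd hle
    _ ≤ ellZeroIntegrand x u := div_le_ellZeroIntegrand x u

lemma le_integral_ellZeroIntegrand {x δ : ℝ} (hx₀ : 0 < x) (hx : x ≤ π / 2) (hδ : 0 < δ)
    (hδπ : δ ≤ π) :
    2 * π - 2 * δ + 4 * cos (x / 2) * arctan (δ / (2 * sin (x / 2)))
      ≤ ∫ u in -π..π, ellZeroIntegrand x u := by
  have hπ := pi_pos
  set a := 2 * sin (x / 2)
  have ha : 0 < a := mul_pos two_pos (sin_pos_of_pos_of_lt_pi (half_pos hx₀) (by linarith))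
  have hF : Continuous (ellZeroIntegrand x) :=
    continuous_const.ellZeroIntegrand continuous_id
      fun _ => abs_cos_lt_one_of_mem_Ioo ⟨hx₀, by linarith⟩
  have hF_int (b c : ℝ) : IntervalIntegrable (ellZeroIntegrand x) MeasureTheory.volume b c :=
    hF.intervalIntegrable b c
  have hspike_int : IntervalIntegrable (fun u => 2 * cos (x / 2) * (a / (a ^ 2 + u ^ 2)))
      MeasureTheory.volume (-δ) δ := by
    apply Continuous.intervalIntegrable
    exact continuous_const.mul (continuous_const.div (by fun_prop) fun u => by positivity)
  have hspike : ∫ u in -δ..δ, 2 * cos (x / 2) * (a / (a ^ 2 + u ^ 2))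
      = 4 * cos (x / 2) * arctan (δ / a) := by
    rw [integral_const_mul, integral_div_sq_add_sq, neg_div, arctan_neg]
    ring
  calc 2 * π - 2 * δ + 4 * cos (x / 2) * arctan (δ / a)
      = (∫ _ in -π..-δ, (1 : ℝ)) + (∫ u in -δ..δ, 2 * cos (x / 2) * (a / (a ^ 2 + u ^ 2)))
          + ∫ _ in δ..π, (1 : ℝ) := by
        rw [hspike]; simp only [integral_const, smul_eq_mul, mul_one]; ring
    _ ≤ (∫ u in -π..-δ, ellZeroIntegrand x u) + (∫ u in -δ..δ, ellZeroIntegrand x u)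
          + ∫ u in δ..π, ellZeroIntegrand x u := by
        gcongr
        · exact integral_mono_on (by linarith) intervalIntegrable_const (hF_int _ _)
            fun u _ => one_le_ellZeroIntegrand x u
        · exact integral_mono_on (by linarith) hspike_int (hF_int _ _)
            fun u _ => cos_half_mul_div_le_ellZeroIntegrand hx₀ hx u
        · exact integral_mono_on hδπ intervalIntegrable_const (hF_int _ _)
            fun u _ => one_le_ellZeroIntegrand x u
    _ = ∫ u in -π..π, ellZeroIntegrand x u := by
        rw [integral_add_adjacent_intervals (hF_int _ _) (hF_int _ _),
          integral_add_adjacent_intervals (hF_int _ _) (hF_int _ _)]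

lemma tendsto_cos_half_mul_arctan {δ : ℝ} (hδ : 0 < δ) :
    Tendsto (fun x => cos (x / 2) * arctan (δ / (2 * sin (x / 2)))) (𝓝[>] 0) (𝓝 (π / 2)) := by
  have hcos : Tendsto (fun x => cos (x / 2)) (𝓝[>] 0) (𝓝 1) :=
    ((by fun_prop : Continuous fun x : ℝ => cos (x / 2)).tendsto' 0 1 (by simp)).mono_left
      nhdsWithin_le_nhds
  have hsin : Tendsto (fun x => 2 * sin (x / 2)) (𝓝[>] 0) (𝓝[>] 0) := by
    refine tendsto_nhdsWithin_iff.mpr ⟨?_, ?_⟩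
    · exact ((by fun_prop : Continuous fun x : ℝ => 2 * sin (x / 2)).tendsto' 0 0
        (by simp)).mono_left nhdsWithin_le_nhds
    · filter_upwards [Ioo_mem_nhdsGT two_pi_pos] with x hx
      exact mul_pos two_pos (sin_pos_of_pos_of_lt_pi (half_pos hx.1) (by linarith [hx.2]))
  have harctan := (tendsto_arctan_atTop.mono_right nhdsWithin_le_nhds).comp
    ((tendsto_inv_nhdsGT_zero.const_mul_atTop hδ).comp hsin)
  simpa [div_eq_mul_inv] using hcos.mul harctan

lemma eventually_lt_ellZero {y : ℝ} (hy : y < 2) : ∀ᶠ x in 𝓝[>] 0, y < ellZero x := by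
  have hπ := pi_pos
  set δ := π * min 1 ((2 - y) / 2)
  have hδ : 0 < δ := mul_pos hπ (lt_min one_pos (by linarith))
  have hδπ : δ ≤ π := mul_le_of_le_one_right hπ.le (min_le_left _ _)
  have hδy : δ ≤ π * ((2 - y) / 2) := mul_le_mul_of_nonneg_left (min_le_right _ _) hπ.le
  have hlim : Tendsto (fun x => 1 / (2 * π) *
      (2 * π - 2 * δ + 4 * cos (x / 2) * arctan (δ / (2 * sin (x / 2)))))
      (𝓝[>] 0) (𝓝 (1 / (2 * π) * (2 * π - 2 * δ + 4 * (π / 2)))) := by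
    simpa only [mul_assoc] using
      (((tendsto_cos_half_mul_arctan hδ).const_mul 4).const_add _).const_mul (1 / (2 * π))
  have hy_lt : y < 1 / (2 * π) * (2 * π - 2 * δ + 4 * (π / 2)) := by
    rw [← sub_pos]
    field_simp
    nlinarith
  filter_upwards [hlim.eventually (eventually_gt_nhds hy_lt), Ioo_mem_nhdsGT (half_pos hπ)]
    with x hyx hx
  rw [ellZero_eq_integral_neg_pi_pi]
  exact hyx.trans_le <| mul_le_mul_of_nonneg_left
    (le_integral_ellZeroIntegrand hx.1 hx.2.le hδ hδπ) (by positivity)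

theorem ellZero_continuous_and_range :
    ContinuousOn ellZero (Set.Ioo 0 π) ∧
      Set.Ico (Real.sqrt 2) 2 ⊆ ellZero '' Set.Ioo 0 π := by
  refine ⟨continuousOn_ellZero, fun y hy => ?_⟩
  obtain ⟨x, hyx, hx⟩ :=
    ((eventually_lt_ellZero hy.2).and (Ioo_mem_nhdsGT (half_pos pi_pos))).exists
  have hsub : Icc x (π / 2) ⊆ Ioo 0 π := Icc_subset_Ioo hx.1 (by linarith [pi_pos])
  obtain ⟨z, hz, hzy⟩ := intermediate_value_Icc' hx.2.le (continuousOn_ellZero.mono hsub)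
    ⟨ellZero_pi_div_two ▸ hy.1, hyx.le⟩
  exact ⟨z, hsub hz, hzy⟩
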